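/- arXiv:2605.21658 — 2 statements merged into one kernel-verified Lean document; each statement's English description precedes it below -/
import Mathlib

section
/- Let k be odd, S = ℤ/2kℤ, G = Aff(ℤ/2kℤ), K₀ ≤ G the subgroup with even translation part, H ≤ K₀, q a quasipolarity, and L = ⟨H, q⟩. Then with K = L ∩ K₀, every L-orbit on S decomposes as Kx ⊔ qKx with |Kx| = |qKx|, and the number of subsets D of S with qD = ∁D and HD = D equals 2^{|S/L|}, where |S/L| is the number of L-orbits on S. -/
/-!
Reduction mod 2 is well defined on `ℤ/2kℤ`, and since units are odd, an affine map
`x ↦ v x + u` shifts it by `u mod 2`; so `K₀` is the set of affine maps preserving parity.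
For `k = 2m + 1`, an affine involution with even translation part `u` fixes `(m + 1) u`, hence the
fixed-point-free `q` flips parity. Thus `L = K ∪ qK`, `K` preserves parity and `q` flips it, which
gives the orbit decomposition. For the count, `D ↦ (x ↦ 𝟙_D x + x mod 2)` turns `qD = ∁D` and
`hD = D` into invariance of a `ZMod 2`-valued function under `q` and `H`, hence under `L`, and such
functions are exactly the functions on `S / L`.
-/

attribute [local instance] Classical.propDecidable


open Pointwise

def affPerm (n : ℕ) (u : ZMod n) (v : (ZMod n)ˣ) : Equiv.Perm (ZMod n) where
  toFun x := v * x + u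
  invFun x := (v⁻¹ : (ZMod n)ˣ) * (x - u)
  left_inv x := by simp
  right_inv x := by simp

def Aff (n : ℕ) : Subgroup (Equiv.Perm (ZMod n)) where
  carrier := {σ | ∃ u v, σ = affPerm n u v}
  one_mem' := ⟨0, 1, Equiv.ext fun x => by simp [affPerm]⟩
  mul_mem' := by
    rintro σ τ ⟨u1, v1, rfl⟩ ⟨u2, v2, rfl⟩
    exact ⟨v1 * u2 + u1, v1 * v2, Equiv.ext fun x => by
      simp [affPerm, Equiv.Perm.mul_apply, mul_add, mul_assoc, add_assoc]⟩
  inv_mem' := by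
    rintro σ ⟨u, v, rfl⟩
    refine ⟨-(↑v⁻¹ * u), v⁻¹, Equiv.ext fun x => ?_⟩
    simp [affPerm, Equiv.Perm.inv_def, Equiv.symm, mul_sub, sub_eq_add_neg, mul_add, mul_neg]

def AffK0 (n : ℕ) : Subgroup (Equiv.Perm (ZMod n)) where
  carrier := {σ | ∃ u v, Even u ∧ σ = affPerm n u v}
  one_mem' := ⟨0, 1, Even.zero, Equiv.ext fun x => by simp [affPerm]⟩
  mul_mem' := by
    rintro σ τ ⟨u1, v1, hu1, rfl⟩ ⟨u2, v2, hu2, rfl⟩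
    exact ⟨v1 * u2 + u1, v1 * v2, (hu2.mul_left _).add hu1, Equiv.ext fun x => by
      simp [affPerm, Equiv.Perm.mul_apply, mul_add, mul_assoc, add_assoc]⟩
  inv_mem' := by
    rintro σ ⟨u, v, hu, rfl⟩
    refine ⟨-(↑v⁻¹ * u), v⁻¹, (hu.mul_left _).neg, Equiv.ext fun x => ?_⟩
    simp [affPerm, Equiv.Perm.inv_def, Equiv.symm, mul_sub, sub_eq_add_neg, mul_add, mul_neg]

open Equiv

section Counting

variable {α : Type*}

def Equiv.Perm.preserving {β : Type*} (f : α → β) : Subgroup (Perm α) where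
  carrier := {g | ∀ x, f (g x) = f x}
  one_mem' _ := rfl
  mul_mem' {g h} hg hh x := (hg (h x)).trans (hh x)
  inv_mem' {g} hg x := by simpa using (hg (g⁻¹ x)).symm

lemma forall_mem_sup_zpowers_invariant_iff {β : Type*} (f : α → β) (H : Subgroup (Perm α))
    (q : Perm α) :
    (∀ g ∈ H ⊔ Subgroup.zpowers q, ∀ x, f (g x) = f x) ↔
      (∀ h ∈ H, ∀ x, f (h x) = f x) ∧ ∀ x, f (q x) = f x := by
  change H ⊔ Subgroup.zpowers q ≤ Perm.preserving f ↔
    H ≤ Perm.preserving f ∧ q ∈ Perm.preserving f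
  rw [sup_le_iff, Subgroup.zpowers_le]

lemma Equiv.Perm.smul_finset_eq_iff (g : Perm α) (D E : Finset α) :
    g • D = E ↔ ∀ x, g x ∈ E ↔ x ∈ D := by
  constructor
  · rintro rfl x
    exact Finset.smul_mem_smul_finset_iff g
  · intro h
    ext y
    rw [← Finset.inv_smul_mem_iff, ← h, Perm.smul_def, Perm.coe_inv, apply_symm_apply]

lemma orbitRel_le_ker_iff {G : Type*} [Group G] [MulAction G α] {β : Type*} (f : α → β) :
    MulAction.orbitRel G α ≤ Setoid.ker f ↔ ∀ (g : G) x, f (g • x) = f x := by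
  constructor
  · intro h g x
    exact h (MulAction.mem_orbit x g)
  · rintro h a b ⟨g, rfl⟩
    exact h g b

variable [Fintype α] (p : α → ZMod 2)

noncomputable def twistedIndicator : Finset α ≃ (α → ZMod 2) where
  toFun D x := if x ∈ D then p x + 1 else p x
  invFun f := Finset.univ.filter fun x => f x ≠ p x
  left_inv D := by ext x; by_cases h : x ∈ D <;> simp [h]
  right_inv f := by
    funext x
    have hZ2 : ∀ a b : ZMod 2, a ≠ b → b + 1 = a := by decide
    by_cases h : f x = p x
    · simp [h]
    · simpa [h] using hZ2 _ _ h

lemma twistedIndicator_apply_eq_iff_smul_eq {g : Perm α} (hg : ∀ x, p (g x) = p x)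
    (D : Finset α) :
    (∀ x, twistedIndicator p D (g x) = twistedIndicator p D x) ↔ g • D = D := by
  rw [Perm.smul_finset_eq_iff]
  refine forall_congr' fun x => ?_
  simp only [twistedIndicator, Equiv.coe_fn_mk, hg]
  by_cases hx : x ∈ D <;> by_cases hgx : g x ∈ D <;> simp [hx, hgx]

lemma twistedIndicator_apply_eq_iff_smul_eq_compl {q : Perm α} (hq : ∀ x, p (q x) = p x + 1)
    (D : Finset α) :
    (∀ x, twistedIndicator p D (q x) = twistedIndicator p D x) ↔ q • D = Dᶜ := by
  rw [Perm.smul_finset_eq_iff]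
  refine forall_congr' fun x => ?_
  simp only [twistedIndicator, Equiv.coe_fn_mk, hq, Finset.mem_compl]
  have h2 := CharTwo.add_cancel_right (p x) 1
  have h1 := succ_ne_self (p x)
  by_cases hx : x ∈ D <;> by_cases hqx : q x ∈ D <;> simp [hx, hqx, h1, h2]

theorem card_filter_smul_eq_compl_and_invariant (H : Subgroup (Perm α)) (q : Perm α)
    (hH : ∀ h ∈ H, ∀ x, p (h x) = p x) (hq : ∀ x, p (q x) = p x + 1) :
    (Finset.univ.filter fun D : Finset α => q • D = Dᶜ ∧ ∀ h ∈ H, h • D = D).card =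
      2 ^ Nat.card (MulAction.orbitRel.Quotient (H ⊔ Subgroup.zpowers q : Subgroup _) α) := by
  let L : Subgroup (Perm α) := H ⊔ Subgroup.zpowers q
  have e : {D : Finset α // q • D = Dᶜ ∧ ∀ h ∈ H, h • D = D} ≃
      {f : α → ZMod 2 // MulAction.orbitRel L α ≤ Setoid.ker f} :=
    (twistedIndicator p).subtypeEquiv fun D => by
      simp only [orbitRel_le_ker_iff, Subtype.forall, Subgroup.mk_smul, Perm.smul_def]
      rw [forall_mem_sup_zpowers_invariant_iff,
        twistedIndicator_apply_eq_iff_smul_eq_compl p hq, and_comm]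
      refine and_congr_left' (forall₂_congr fun h hh => ?_)
      exact (twistedIndicator_apply_eq_iff_smul_eq p (hH h hh) D).symm
  rw [← Fintype.card_subtype, Fintype.card_congr (e.trans (Setoid.liftEquiv _)),
    Fintype.card_fun, ZMod.card, Nat.card_eq_fintype_card]

end Counting

section Orbits

variable {α : Type*}

lemma orbit_eq_orbit_inf_union_smul {L K : Subgroup (Perm α)} {q : Perm α} (hqL : q ∈ L)
    (hcoset : ∀ g ∈ L, g ∉ K → q⁻¹ * g ∈ K) (x : α) :
    MulAction.orbit L x =
      MulAction.orbit (L ⊓ K : Subgroup _) x ∪ q • MulAction.orbit (L ⊓ K : Subgroup _) x := by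
  ext y
  constructor
  · rintro ⟨⟨g, hgL⟩, rfl⟩
    by_cases hgK : g ∈ K
    · exact Or.inl ⟨⟨g, hgL, hgK⟩, rfl⟩
    · refine Or.inr (Set.mem_smul_set.2 ⟨(q⁻¹ * g) • x, ⟨⟨q⁻¹ * g, ?_⟩, rfl⟩, ?_⟩)
      · exact Subgroup.mem_inf.2 ⟨mul_mem (inv_mem hqL) hgL, hcoset g hgL hgK⟩
      · simp [mul_smul]
  · rintro (⟨⟨g, hg⟩, rfl⟩ | ⟨_, ⟨⟨g, hg⟩, rfl⟩, rfl⟩)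
    · exact ⟨⟨g, hg.1⟩, rfl⟩
    · exact ⟨⟨q * g, mul_mem hqL hg.1⟩, mul_smul q g x⟩

lemma disjoint_orbit_smul_orbit (p : α → ZMod 2) {K : Subgroup (Perm α)}
    (hK : ∀ g ∈ K, ∀ x, p (g x) = p x) {q : Perm α} (hq : ∀ x, p (q x) = p x + 1) (x : α) :
    Disjoint (MulAction.orbit K x) (q • MulAction.orbit K x) := by
  rw [Set.disjoint_left]
  rintro _ ⟨⟨g, hg⟩, rfl⟩ ⟨_, ⟨⟨g', hg'⟩, rfl⟩, h⟩
  have hp := congrArg p h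
  simp only [Subgroup.mk_smul, Perm.smul_def, hq, hK g hg, hK g' hg'] at hp
  exact succ_ne_self _ hp

end Orbits

section Parity

variable {k : ℕ}

def parity (k : ℕ) : ZMod (2 * k) →+* ZMod 2 := ZMod.castHom (dvd_mul_right 2 k) (ZMod 2)

lemma parity_unit (v : (ZMod (2 * k))ˣ) : parity k v = 1 :=
  Fin.eq_one_of_ne_zero _ (v.isUnit.map (parity k)).ne_zero

lemma parity_eq_zero_iff_even {u : ZMod (2 * k)} : parity k u = 0 ↔ Even u := by
  obtain ⟨z, rfl⟩ := ZMod.intCast_surjective u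
  constructor
  · intro h
    rw [map_intCast, ZMod.intCast_eq_zero_iff_even] at h
    exact h.intCast
  · rintro ⟨w, hw⟩
    rw [hw, map_add]
    exact CharTwo.add_self_eq_zero _

lemma parity_apply_of_mem_aff {σ : Perm (ZMod (2 * k))} (hσ : σ ∈ Aff (2 * k))
    (x : ZMod (2 * k)) : parity k (σ x) = parity k (σ 0) + parity k x := by
  obtain ⟨u, v, rfl⟩ := hσ
  simp [affPerm, parity_unit, add_comm]

lemma mem_affK0_iff {σ : Perm (ZMod (2 * k))} :
    σ ∈ AffK0 (2 * k) ↔ σ ∈ Aff (2 * k) ∧ parity k (σ 0) = 0 := by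
  constructor
  · rintro ⟨u, v, hu, rfl⟩
    exact ⟨⟨u, v, rfl⟩, by simpa [affPerm] using parity_eq_zero_iff_even.2 hu⟩
  · rintro ⟨⟨u, v, rfl⟩, h⟩
    exact ⟨u, v, parity_eq_zero_iff_even.1 (by simpa [affPerm] using h), rfl⟩

lemma parity_apply_zero_of_notMem_affK0 {σ : Perm (ZMod (2 * k))} (hσ : σ ∈ Aff (2 * k))
    (hσK : σ ∉ AffK0 (2 * k)) : parity k (σ 0) = 1 :=
  Fin.eq_one_of_ne_zero _ fun h => hσK (mem_affK0_iff.2 ⟨hσ, h⟩)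

lemma parity_apply_of_mem_affK0 {σ : Perm (ZMod (2 * k))} (hσ : σ ∈ AffK0 (2 * k))
    (x : ZMod (2 * k)) : parity k (σ x) = parity k x := by
  obtain ⟨hσA, h0⟩ := mem_affK0_iff.1 hσ
  rw [parity_apply_of_mem_aff hσA, h0, zero_add]

lemma affPerm_exists_fixed_of_even_of_sq_eq_one (hk : Odd k) {u : ZMod (2 * k)} (hu : Even u)
    {v : (ZMod (2 * k))ˣ} (hsq : affPerm _ u v ^ 2 = 1) :
    ∃ x, affPerm _ u v x = x := by
  have hinv : affPerm _ u v (affPerm _ u v 0) = 0 := by rw [← Perm.mul_apply, ← sq, hsq]; rfl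
  obtain ⟨m, rfl⟩ := hk
  obtain ⟨w, rfl⟩ := hu
  -- `v` acts as `-1` on `u = w + w` and `k • u = 0`, so `(m + 1) * u` is fixed.
  refine ⟨(m + 1) * (w + w), ?_⟩
  have h2k : (2 * (2 * m + 1) : ZMod (2 * (2 * m + 1))) = 0 := by
    exact_mod_cast ZMod.natCast_self _
  simp only [affPerm, Equiv.coe_fn_mk, mul_zero, zero_add] at hinv ⊢
  linear_combination (m + 1 : ZMod (2 * (2 * m + 1))) * hinv - w * h2k

lemma parity_apply_of_fixedPointFree (hk : Odd k) {q : Perm (ZMod (2 * k))}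
    (hq : q ∈ Aff (2 * k)) (hq2 : q ^ 2 = 1) (hqf : ∀ x, q x ≠ x) (x : ZMod (2 * k)) :
    parity k (q x) = parity k x + 1 := by
  have hqK : q ∉ AffK0 (2 * k) := by
    rintro ⟨u, v, hu, rfl⟩
    obtain ⟨y, hy⟩ := affPerm_exists_fixed_of_even_of_sq_eq_one hk hu hq2
    exact hqf y hy
  rw [parity_apply_of_mem_aff hq, parity_apply_zero_of_notMem_affK0 hq hqK, add_comm]

lemma inv_mul_mem_affK0 {q g : Perm (ZMod (2 * k))} (hq : q ∈ Aff (2 * k))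
    (hflip : ∀ x, parity k (q x) = parity k x + 1) (hg : g ∈ Aff (2 * k))
    (hgK : g ∉ AffK0 (2 * k)) : q⁻¹ * g ∈ AffK0 (2 * k) := by
  refine mem_affK0_iff.2 ⟨mul_mem (inv_mem hq) hg, ?_⟩
  have h := hflip ((q⁻¹ * g) 0)
  rw [← Perm.mul_apply q, mul_inv_cancel_left, parity_apply_zero_of_notMem_affK0 hg hgK] at h
  exact add_eq_right.1 h.symm

end Parity

theorem stmt_11_general (k : ℕ) (hk : Odd k) [NeZero (2 * k)]
    (H : Subgroup (Equiv.Perm (ZMod (2 * k)))) (hH : H ≤ AffK0 (2 * k))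
    (q : Equiv.Perm (ZMod (2 * k))) (hq : q ∈ Aff (2 * k)) (hq2 : q ^ 2 = 1)
    (hqf : ∀ x : ZMod (2 * k), q x ≠ x) :
    (∀ x : ZMod (2 * k),
      (MulAction.orbit ((H ⊔ Subgroup.zpowers q) : Subgroup _) x =
          MulAction.orbit (((H ⊔ Subgroup.zpowers q) ⊓ AffK0 (2 * k)) : Subgroup _) x ∪
            q • MulAction.orbit (((H ⊔ Subgroup.zpowers q) ⊓ AffK0 (2 * k)) : Subgroup _) x) ∧
        Disjoint (MulAction.orbit (((H ⊔ Subgroup.zpowers q) ⊓ AffK0 (2 * k)) : Subgroup _) x)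
          (q • MulAction.orbit (((H ⊔ Subgroup.zpowers q) ⊓ AffK0 (2 * k)) : Subgroup _) x) ∧
        Nat.card (MulAction.orbit (((H ⊔ Subgroup.zpowers q) ⊓ AffK0 (2 * k)) : Subgroup _) x) =
          Nat.card
            (q • MulAction.orbit (((H ⊔ Subgroup.zpowers q) ⊓ AffK0 (2 * k)) : Subgroup _) x :
              Set (ZMod (2 * k)))) ∧
    (Finset.univ.filter (fun D : Finset (ZMod (2 * k)) =>
        q • D = Dᶜ ∧ ∀ h ∈ H, h • D = D)).card =
      2 ^ Nat.card
            (MulAction.orbitRel.Quotient ((H ⊔ Subgroup.zpowers q) : Subgroup _)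
              (ZMod (2 * k))) := by
  have hflip := parity_apply_of_fixedPointFree hk hq hq2 hqf
  have hLA : H ⊔ Subgroup.zpowers q ≤ Aff (2 * k) :=
    sup_le (fun h hh => (mem_affK0_iff.1 (hH hh)).1) (Subgroup.zpowers_le.2 hq)
  refine ⟨fun x => ⟨?_, ?_, ?_⟩, ?_⟩
  · exact orbit_eq_orbit_inf_union_smul (Subgroup.mem_sup_right (Subgroup.mem_zpowers q))
      (fun g hg hgK => inv_mul_mem_affK0 hq hflip (hLA hg) hgK) x
  · exact disjoint_orbit_smul_orbit (parity k)
      (fun g hg => parity_apply_of_mem_affK0 (Subgroup.mem_inf.1 hg).2) hflip x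
  · rw [Nat.card_coe_set_eq, Nat.card_coe_set_eq, Set.ncard_smul_set]
  · convert card_filter_smul_eq_compl_and_invariant (parity k) H q
      (fun h hh => parity_apply_of_mem_affK0 (hH hh)) hflip

/-- For `k` odd, `H ≤ K₀`, `q` a quasipolarity and `L = ⟨H, q⟩`, with `K = L ∩ K₀` every
`L`-orbit decomposes as `Kx ⊔ qKx` with `|Kx| = |qKx|`, and the number of subsets `D` with
`qD = ∁D` and `HD = D` equals `2^{|S/L|}`. -/
theorem stmt_11 (k : ℕ) (hk : Odd k) (hk0 : 0 < k) [NeZero (2 * k)]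
    (H : Subgroup (Equiv.Perm (ZMod (2 * k)))) (hH : H ≤ AffK0 (2 * k))
    (q : Equiv.Perm (ZMod (2 * k))) (hq : q ∈ Aff (2 * k)) (hq2 : q ^ 2 = 1)
    (hqf : ∀ x : ZMod (2 * k), q x ≠ x) :
    (∀ x : ZMod (2 * k),
      (MulAction.orbit ((H ⊔ Subgroup.zpowers q) : Subgroup _) x =
          MulAction.orbit (((H ⊔ Subgroup.zpowers q) ⊓ AffK0 (2 * k)) : Subgroup _) x ∪
            q • MulAction.orbit (((H ⊔ Subgroup.zpowers q) ⊓ AffK0 (2 * k)) : Subgroup _) x) ∧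
        Disjoint (MulAction.orbit (((H ⊔ Subgroup.zpowers q) ⊓ AffK0 (2 * k)) : Subgroup _) x)
          (q • MulAction.orbit (((H ⊔ Subgroup.zpowers q) ⊓ AffK0 (2 * k)) : Subgroup _) x) ∧
        Nat.card (MulAction.orbit (((H ⊔ Subgroup.zpowers q) ⊓ AffK0 (2 * k)) : Subgroup _) x) =
          Nat.card
            (q • MulAction.orbit (((H ⊔ Subgroup.zpowers q) ⊓ AffK0 (2 * k)) : Subgroup _) x :
              Set (ZMod (2 * k)))) ∧
    (Finset.univ.filter (fun D : Finset (ZMod (2 * k)) =>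
        q • D = Dᶜ ∧ ∀ h ∈ H, h • D = D)).card =
      2 ^ Nat.card
            (MulAction.orbitRel.Quotient ((H ⊔ Subgroup.zpowers q) : Subgroup _)
              (ZMod (2 * k))) :=
  stmt_11_general k hk H hH q hq hq2 hqf
end

section
/- Let G = Aff(ℤ/2kℤ) with k odd and K₀ the even-translation subgroup. If L ≤ G with L ∩ K₀ = 1 and L ⊄ K₀, then |L| = 2 and the nontrivial element of L is a quasipolarity (a fixed-point-free involution); hence |𝒬 ∩ L| = 1 where 𝒬 is the set of quasipolarities. -/
/-! Since the units of `ℤ/2kℤ` are odd, `σ x ≡ x + σ 0 (mod 2)` for every affine `σ`, so the parity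
of `σ 0` is a homomorphism `Aff(ℤ/2kℤ) → ℤ/2` with kernel `K₀`. A subgroup `L` meeting `K₀`
trivially embeds into `ℤ/2`, and is nontrivial when `L ⊄ K₀`, so `|L| = 2`; its generator changes
the parity of every point and therefore fixes none. -/

attribute [local instance] Classical.propDecidable


open Pointwise

lemma ZMod.eq_one_of_isUnit_two {x : ZMod 2} (hx : IsUnit x) : x = 1 := by
  fin_cases x
  · exact absurd hx not_isUnit_zero
  · rfl

lemma ZMod.even_iff_castHom_two_eq_zero {n : ℕ} (hn : 2 ∣ n) (u : ZMod n) :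
    Even u ↔ ZMod.castHom hn (ZMod 2) u = 0 := by
  refine ⟨fun ⟨r, hr⟩ => ?_, fun h => ?_⟩
  · rw [hr, map_add, ← two_mul, show (2 : ZMod 2) = 0 from rfl, zero_mul]
  · rw [← ZMod.intCast_zmod_cast u, map_intCast, ZMod.intCast_eq_zero_iff_even] at h
    simpa only [eq_intCast, ZMod.intCast_zmod_cast] using h.map (Int.castRingHom (ZMod n))

lemma Subgroup.card_eq_two_of_inf_ker_eq_bot {G H : Type*} [Group G] [Group H]
    (hH : Nat.card H = 2) (f : G →* H) {L : Subgroup G} (h1 : L ⊓ f.ker = ⊥) (h2 : ¬ L ≤ f.ker) :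
    Nat.card L = 2 := by
  have hinj : Function.Injective (f.domRestrict L) := by
    rw [← MonoidHom.ker_eq_bot_iff, MonoidHom.ker_domRestrict, Subgroup.subgroupOf_eq_bot,
      disjoint_iff, inf_comm, h1]
  have : Finite H := Nat.finite_of_card_ne_zero (by omega)
  have : Finite L := Finite.of_injective _ hinj
  have hle : Nat.card L ≤ 2 := hH ▸ Nat.card_le_card_of_injective _ hinj
  have hgt : 1 < Nat.card L := (Subgroup.one_lt_card_iff_ne_bot L).2 fun h => h2 (h ▸ bot_le)
  omega

namespace Aff

open Equiv

variable {n : ℕ}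

lemma apply_zero_of_eq_affPerm {σ : Perm (ZMod n)} {u : ZMod n} {v : (ZMod n)ˣ}
    (h : σ = affPerm n u v) : σ 0 = u := by
  simp [h, affPerm]

lemma mem_AffK0_iff (σ : Aff n) : (σ : Perm (ZMod n)) ∈ AffK0 n ↔ Even ((σ : Perm (ZMod n)) 0) := by
  obtain ⟨u, v, hσ⟩ := σ.2
  refine ⟨fun ⟨u', v', hu', h'⟩ => ?_, fun hu => ⟨u, v, ?_, hσ⟩⟩
  · rwa [apply_zero_of_eq_affPerm h']
  · rwa [← apply_zero_of_eq_affPerm hσ]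

lemma castHom_two_apply (hn : 2 ∣ n) (σ : Aff n) (x : ZMod n) :
    ZMod.castHom hn (ZMod 2) ((σ : Perm (ZMod n)) x) =
      ZMod.castHom hn (ZMod 2) x + ZMod.castHom hn (ZMod 2) ((σ : Perm (ZMod n)) 0) := by
  obtain ⟨u, v, hσ⟩ := σ.2
  have hv : ZMod.castHom hn (ZMod 2) v = 1 := ZMod.eq_one_of_isUnit_two (v.isUnit.map _)
  rw [apply_zero_of_eq_affPerm hσ, hσ]
  simp only [affPerm, Equiv.coe_fn_mk, map_add, map_mul, hv, one_mul]

def parity (hn : 2 ∣ n) : Aff n →* Multiplicative (ZMod 2) where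
  toFun σ := Multiplicative.ofAdd (ZMod.castHom hn (ZMod 2) ((σ : Perm (ZMod n)) 0))
  map_one' := by simp
  map_mul' σ τ := by
    rw [← ofAdd_add, add_comm, ← castHom_two_apply]
    rfl

lemma ker_parity (hn : 2 ∣ n) : (parity hn).ker = (AffK0 n).subgroupOf (Aff n) := by
  ext σ
  rw [MonoidHom.mem_ker, Subgroup.mem_subgroupOf, mem_AffK0_iff,
    ZMod.even_iff_castHom_two_eq_zero hn]
  rfl

lemma smul_ne_self_of_parity_ne_one (hn : 2 ∣ n) {σ : Aff n} (hσ : parity hn σ ≠ 1)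
    (x : ZMod n) : σ • x ≠ x := by
  intro hx
  have := castHom_two_apply hn σ x
  rw [show (σ : Perm (ZMod n)) x = x from hx, left_eq_add] at this
  exact hσ (congrArg Multiplicative.ofAdd this)

end Aff

theorem stmt_17_general (k : ℕ)
    (L : Subgroup ↥(Aff (2 * k)))
    (h1 : L ⊓ (AffK0 (2 * k)).subgroupOf (Aff (2 * k)) = ⊥)
    (h2 : ¬ L ≤ (AffK0 (2 * k)).subgroupOf (Aff (2 * k))) :
    Nat.card L = 2 ∧
      (∀ q ∈ L, q ≠ 1 → q ^ 2 = 1 ∧ ∀ x : ZMod (2 * k), q • x ≠ x) ∧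
      (∃! q : ↥(Aff (2 * k)), q ∈ L ∧ q ^ 2 = 1 ∧ ∀ x : ZMod (2 * k), q • x ≠ x) := by
  have hn : 2 ∣ 2 * k := dvd_mul_right 2 k
  rw [← Aff.ker_parity hn] at h1 h2
  have hcard : Nat.card L = 2 :=
    Subgroup.card_eq_two_of_inf_ker_eq_bot (by simp) (Aff.parity hn) h1 h2
  have hquasi : ∀ q ∈ L, q ≠ 1 → q ^ 2 = 1 ∧ ∀ x : ZMod (2 * k), q • x ≠ x := by
    intro q hq hq1
    refine ⟨by simpa [hcard] using congrArg Subtype.val (pow_card_eq_one' (x := (⟨q, hq⟩ : L))),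
      Aff.smul_ne_self_of_parity_ne_one hn fun hpq => hq1 ?_⟩
    simpa using h1.le ⟨hq, hpq⟩
  refine ⟨hcard, hquasi, ?_⟩
  obtain ⟨⟨q, hq⟩, hq1, hunique⟩ := (Nat.card_eq_two_iff' (1 : L)).1 hcard
  refine ⟨q, ⟨hq, hquasi q hq (by simpa using hq1)⟩, fun y ⟨hy, _, hfree⟩ => ?_⟩
  have hy1 : y ≠ 1 := fun h => hfree 0 (h ▸ one_smul _ _)
  exact congrArg Subtype.val (hunique ⟨y, hy⟩ (by simpa using hy1))

/-- For `k` odd and `L ≤ Aff(ℤ/2kℤ)` with `L ∩ K₀ = 1` and `L ⊄ K₀`, `L` has order `2`,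
its nontrivial element is a quasipolarity, and `L` contains exactly one quasipolarity. -/
theorem stmt_17 (k : ℕ) (hk : Odd k) (hk0 : 0 < k) [NeZero (2 * k)]
    (L : Subgroup ↥(Aff (2 * k)))
    (h1 : L ⊓ (AffK0 (2 * k)).subgroupOf (Aff (2 * k)) = ⊥)
    (h2 : ¬ L ≤ (AffK0 (2 * k)).subgroupOf (Aff (2 * k))) :
    Nat.card L = 2 ∧
      (∀ q ∈ L, q ≠ 1 → q ^ 2 = 1 ∧ ∀ x : ZMod (2 * k), q • x ≠ x) ∧
      (∃! q : ↥(Aff (2 * k)), q ∈ L ∧ q ^ 2 = 1 ∧ ∀ x : ZMod (2 * k), q • x ≠ x) :=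
  stmt_17_general k L h1 h2
end
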